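/- For α > 0 and k ≠ 0, ω_α'(k) ≤ (1/2)(√(α·tanh(αk)/k) + α·sech(αk)). -/

import Mathlib

noncomputable def omegaA (α k : ℝ) : ℝ :=
  Real.sign k * Real.sqrt (α * k * Real.tanh (α * k))

/-!
Since `ω_α(k) = ω_1(αk)` and `ω_1` is odd, it suffices to bound `ω_1'(z)` for `z > 0`, where
`ω_1 = √(z tanh z)` and
`ω_1'(z) = (tanh z + z sech² z) / (2√(z tanh z)) = (√(tanh z / z) + sech z · z sech z / √(z tanh z)) / 2`.
Here `z sech z / √(z tanh z) ≤ 1` because `(z sech z)² ≤ z tanh z`, i.e. `z ≤ sinh z cosh z`.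
-/

open Real

namespace Real

theorem hasDerivAt_tanh (x : ℝ) : HasDerivAt tanh ((cosh x)⁻¹ ^ 2) x := by
  have hcosh := (cosh_pos x).ne'
  have h := (hasDerivAt_sinh x).div (hasDerivAt_cosh x) hcosh
  rw [show sinh / cosh = tanh from funext fun y => (tanh_eq_sinh_div_cosh y).symm] at h
  refine h.congr_deriv ?_
  rw [← sq, ← sq, cosh_sq_sub_sinh_sq, inv_pow, one_div]

theorem tanh_pos {x : ℝ} (hx : 0 < x) : 0 < tanh x := by
  rw [tanh_eq_sinh_div_cosh]
  exact div_pos (sinh_pos_iff.2 hx) (cosh_pos x)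

theorem mul_inv_cosh_le_sqrt_mul_tanh {x : ℝ} (hx : 0 ≤ x) : x * (cosh x)⁻¹ ≤ √(x * tanh x) := by
  have hu : 0 < (cosh x)⁻¹ := inv_pos.2 (cosh_pos x)
  have hu_le : (cosh x)⁻¹ ≤ 1 := inv_le_one_of_one_le₀ (one_le_cosh x)
  have hsinh : x ≤ sinh x := self_le_sinh_iff.2 hx
  refine (le_abs_self _).trans (abs_le_sqrt ?_)
  rw [tanh_eq_sinh_div_cosh, div_eq_mul_inv]
  calc (x * (cosh x)⁻¹) ^ 2 = x * (x * (cosh x)⁻¹ * (cosh x)⁻¹) := by ring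
    _ ≤ x * (sinh x * (cosh x)⁻¹ * 1) := by gcongr
    _ = x * (sinh x * (cosh x)⁻¹) := by ring

end Real

theorem omegaA_eq_omegaA_one_comp_mul {α : ℝ} (hα : 0 < α) :
    omegaA α = fun k => omegaA 1 (α * k) := by
  funext k
  rcases lt_trichotomy k 0 with hk | rfl | hk
  · simp [omegaA, sign_of_neg hk, sign_of_neg (mul_neg_of_pos_of_neg hα hk)]
  · simp [omegaA]
  · simp [omegaA, sign_of_pos hk, sign_of_pos (mul_pos hα hk)]

theorem omegaA_one_neg (z : ℝ) : omegaA 1 (-z) = -omegaA 1 z := by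
  simp [omegaA, sign_neg, tanh_neg]

theorem deriv_omegaA_one_neg (z : ℝ) : deriv (omegaA 1) (-z) = deriv (omegaA 1) z := by
  have h := deriv_comp_neg (f := omegaA 1) (x := z)
  rwa [show (fun x => omegaA 1 (-x)) = -omegaA 1 from funext omegaA_one_neg, deriv.neg,
    neg_inj, eq_comm] at h

theorem hasDerivAt_omegaA_one {z : ℝ} (hz : 0 < z) :
    HasDerivAt (omegaA 1) ((tanh z + z * (cosh z)⁻¹ ^ 2) / (2 * √(z * tanh z))) z := by
  have h_eq : (fun x => √(x * tanh x)) =ᶠ[nhds z] omegaA 1 := by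
    filter_upwards [Ioi_mem_nhds hz] with x hx
    simp [omegaA, sign_of_pos (Set.mem_Ioi.1 hx)]
  have h := ((hasDerivAt_id z).mul (hasDerivAt_tanh z)).sqrt (mul_pos hz (tanh_pos hz)).ne'
  simp only [id, one_mul] at h
  exact h.congr_of_eventuallyEq h_eq.symm

theorem deriv_omegaA_one_le_of_pos {z : ℝ} (hz : 0 < z) :
    deriv (omegaA 1) z ≤ 1 / 2 * (√(tanh z / z) + (cosh z)⁻¹) := by
  set u := (cosh z)⁻¹
  set s := √(z * tanh z)
  have hu : 0 < u := inv_pos.2 (cosh_pos z)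
  have hs : 0 < s := sqrt_pos.2 (mul_pos hz (tanh_pos hz))
  have hs_sq : s ^ 2 = z * tanh z := sq_sqrt (mul_pos hz (tanh_pos hz)).le
  have h_sqrt : √(tanh z / z) = s / z := by
    rw [← sqrt_sq hz.le, ← sqrt_div' _ (sq_nonneg z), sqrt_sq hz.le]
    congr 1
    field_simp
  rw [(hasDerivAt_omegaA_one hz).deriv, h_sqrt]
  calc (tanh z + z * u ^ 2) / (2 * s) = 1 / 2 * (s / z + u * (z * u / s)) := by
        field_simp
        rw [hs_sq]
        ring
    _ ≤ 1 / 2 * (s / z + u * 1) := by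
        gcongr
        exact div_le_one_of_le₀ (mul_inv_cosh_le_sqrt_mul_tanh hz.le) hs.le
    _ = 1 / 2 * (s / z + u) := by ring

theorem deriv_omegaA_one_le {z : ℝ} (hz : z ≠ 0) :
    deriv (omegaA 1) z ≤ 1 / 2 * (√(tanh z / z) + (cosh z)⁻¹) := by
  rcases hz.lt_or_gt with hz | hz
  · have h := deriv_omegaA_one_le_of_pos (neg_pos.2 hz)
    rwa [deriv_omegaA_one_neg, tanh_neg, neg_div_neg_eq, cosh_neg] at h
  · exact deriv_omegaA_one_le_of_pos hz

theorem omegaA_deriv_le (α : ℝ) (hα : 0 < α) (k : ℝ) (hk : k ≠ 0) :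
    deriv (omegaA α) k ≤
      (1 / 2) * (Real.sqrt (α * Real.tanh (α * k) / k) + α * (Real.cosh (α * k))⁻¹) := by
  rw [omegaA_eq_omegaA_one_comp_mul hα, deriv_comp_mul_left, smul_eq_mul]
  have h_sqrt : √(α * tanh (α * k) / k) = α * √(tanh (α * k) / (α * k)) := by
    rw [← sqrt_sq hα.le, ← sqrt_mul (sq_nonneg α), sqrt_sq hα.le]
    congr 1
    field_simp
  calc α * deriv (omegaA 1) (α * k)
      ≤ α * (1 / 2 * (√(tanh (α * k) / (α * k)) + (cosh (α * k))⁻¹)) :=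
        mul_le_mul_of_nonneg_left (deriv_omegaA_one_le (mul_ne_zero hα.ne' hk)) hα.le
    _ = 1 / 2 * (√(α * tanh (α * k) / k) + α * (cosh (α * k))⁻¹) := by
        rw [h_sqrt]
        ring
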